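/- Let φ₁, φ₂ be holomorphic solutions of r(r²−34r+1)φ'' + (2r²−51r+1)φ' + (1/4)(r−10)φ = 0 on a domain avoiding the singular points. Then for any constants a, b, c, the function ψ = aφ₁² + bφ₁φ₂ + cφ₂² solves Apéry's equation r²(r²−34r+1)ψ''' + r(6r²−153r+3)ψ'' + (7r²−112r+1)ψ' + (r−5)ψ = 0. -/

import Mathlib

/-!
Apéry's operator is linear, so it suffices to show that it kills the product `f * g` of any two
solutions of the second-order equation. Expanding `(f g)'''`, `(f g)''`, `(f g)'` by Leibniz, the
result is a combination, with polynomial coefficients, of the second-order equations for `f` and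
`g` and of their first derivatives.
-/

open Filter Topology

theorem AnalyticAt.iteratedDeriv {𝕜 F : Type*} [NontriviallyNormedField 𝕜] [NormedAddCommGroup F]
    [NormedSpace 𝕜 F] [CompleteSpace F] {f : 𝕜 → F} {x : 𝕜} (hf : AnalyticAt 𝕜 f x) (n : ℕ) :
    AnalyticAt 𝕜 (iteratedDeriv n f) x := by
  rw [iteratedDeriv_eq_iterate]
  exact hf.iterated_deriv n

noncomputable def aperyOp₂ (φ : ℂ → ℂ) (r : ℂ) : ℂ :=
  r * (r ^ 2 - 34 * r + 1) * iteratedDeriv 2 φ r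
    + (2 * r ^ 2 - 51 * r + 1) * deriv φ r + (1 / 4) * (r - 10) * φ r

noncomputable def aperyOp₃ (ψ : ℂ → ℂ) (r : ℂ) : ℂ :=
  r ^ 2 * (r ^ 2 - 34 * r + 1) * iteratedDeriv 3 ψ r
    + r * (6 * r ^ 2 - 153 * r + 3) * iteratedDeriv 2 ψ r
    + (7 * r ^ 2 - 112 * r + 1) * deriv ψ r + (r - 5) * ψ r

theorem deriv_aperyOp₂ {φ : ℂ → ℂ} {r : ℂ} (hφ : AnalyticAt ℂ φ r) :
    deriv (aperyOp₂ φ) r = r * (r ^ 2 - 34 * r + 1) * iteratedDeriv 3 φ r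
      + (5 * r ^ 2 - 119 * r + 2) * iteratedDeriv 2 φ r
      + (17 * r - 214) / 4 * deriv φ r + 1 / 4 * φ r := by
  have h₁ := hφ.deriv
  have h₂ := hφ.iteratedDeriv 2
  unfold aperyOp₂
  simp (disch := fun_prop) only [deriv_fun_add, deriv_fun_mul, deriv_fun_pow, deriv_fun_sub,
    deriv_const, deriv_id'', deriv_const_mul_id]
  simp only [iteratedDeriv_eq_iterate, Function.iterate_succ_apply', Function.iterate_zero_apply]
  push_cast
  ring

theorem aperyOp₃_add {u v : ℂ → ℂ} {r : ℂ} (hu : ContDiffAt ℂ 3 u r) (hv : ContDiffAt ℂ 3 v r) :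
    aperyOp₃ (fun t => u t + v t) r = aperyOp₃ u r + aperyOp₃ v r := by
  have hu₁ : ContDiffAt ℂ 1 u r := hu.of_le (by norm_num)
  have hv₁ : ContDiffAt ℂ 1 v r := hv.of_le (by norm_num)
  have hu₂ : ContDiffAt ℂ 2 u r := hu.of_le (by norm_num)
  have hv₂ : ContDiffAt ℂ 2 v r := hv.of_le (by norm_num)
  simp only [aperyOp₃, ← iteratedDeriv_one, iteratedDeriv_fun_add hu hv,
    iteratedDeriv_fun_add hu₂ hv₂, iteratedDeriv_fun_add hu₁ hv₁]
  ring

theorem aperyOp₃_const_mul (c : ℂ) (u : ℂ → ℂ) (r : ℂ) :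
    aperyOp₃ (fun t => c * u t) r = c * aperyOp₃ u r := by
  simp only [aperyOp₃, ← iteratedDeriv_one, iteratedDeriv_const_mul_field]
  ring

theorem aperyOp₃_mul_eq_zero {f g : ℂ → ℂ} {r : ℂ} (hf : AnalyticAt ℂ f r)
    (hg : AnalyticAt ℂ g r) (hLf : aperyOp₂ f =ᶠ[𝓝 r] 0) (hLg : aperyOp₂ g =ᶠ[𝓝 r] 0) :
    aperyOp₃ (fun t => f t * g t) r = 0 := by
  have Ef : aperyOp₂ f r = 0 := hLf.eq_of_nhds
  have Eg : aperyOp₂ g r = 0 := hLg.eq_of_nhds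
  have Ef' : deriv (aperyOp₂ f) r = 0 := by simp [hLf.deriv_eq]
  have Eg' : deriv (aperyOp₂ g) r = 0 := by simp [hLg.deriv_eq]
  rw [deriv_aperyOp₂ hf] at Ef'
  rw [deriv_aperyOp₂ hg] at Eg'
  unfold aperyOp₂ at Ef Eg
  simp only [aperyOp₃, ← iteratedDeriv_one, iteratedDeriv_fun_mul hf.contDiffAt hg.contDiffAt,
    Finset.sum_range_succ, Finset.sum_range_zero]
  simp only [Nat.choose, Nat.cast_one, Nat.cast_ofNat, Nat.reduceAdd, Nat.reduceSub,
    Nat.add_one_sub_one, tsub_zero, tsub_self, iteratedDeriv_zero, iteratedDeriv_one]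
  linear_combination (g r + 3 * r * deriv g r) * Ef + (f r + 3 * r * deriv f r) * Eg
    + r * g r * Ef' + r * f r * Eg'

theorem apery_symmetric_square (U : Set ℂ) (hU : IsOpen U) (φ₁ φ₂ : ℂ → ℂ)
    (hφ₁ : ∀ r ∈ U, AnalyticAt ℂ φ₁ r) (hφ₂ : ∀ r ∈ U, AnalyticAt ℂ φ₂ r)
    (h1 : ∀ r ∈ U, r * (r ^ 2 - 34 * r + 1) * iteratedDeriv 2 φ₁ r
      + (2 * r ^ 2 - 51 * r + 1) * deriv φ₁ r + (1 / 4) * (r - 10) * φ₁ r = 0)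
    (h2 : ∀ r ∈ U, r * (r ^ 2 - 34 * r + 1) * iteratedDeriv 2 φ₂ r
      + (2 * r ^ 2 - 51 * r + 1) * deriv φ₂ r + (1 / 4) * (r - 10) * φ₂ r = 0)
    (a b c : ℂ) :
    ∀ r ∈ U,
      r ^ 2 * (r ^ 2 - 34 * r + 1) *
          iteratedDeriv 3 (fun t => a * (φ₁ t) ^ 2 + b * φ₁ t * φ₂ t + c * (φ₂ t) ^ 2) r
        + r * (6 * r ^ 2 - 153 * r + 3) *
            iteratedDeriv 2 (fun t => a * (φ₁ t) ^ 2 + b * φ₁ t * φ₂ t + c * (φ₂ t) ^ 2) r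
        + (7 * r ^ 2 - 112 * r + 1) *
            deriv (fun t => a * (φ₁ t) ^ 2 + b * φ₁ t * φ₂ t + c * (φ₂ t) ^ 2) r
        + (r - 5) * (a * (φ₁ r) ^ 2 + b * φ₁ r * φ₂ r + c * (φ₂ r) ^ 2) = 0 := by
  intro r hr
  have hA₁ := hφ₁ r hr
  have hA₂ := hφ₂ r hr
  have hC₁ : ContDiffAt ℂ 3 φ₁ r := hA₁.contDiffAt
  have hC₂ : ContDiffAt ℂ 3 φ₂ r := hA₂.contDiffAt
  have hL₁ : aperyOp₂ φ₁ =ᶠ[𝓝 r] 0 := eventually_of_mem (hU.mem_nhds hr) h1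
  have hL₂ : aperyOp₂ φ₂ =ᶠ[𝓝 r] 0 := eventually_of_mem (hU.mem_nhds hr) h2
  have hψ : (fun t => a * φ₁ t ^ 2 + b * φ₁ t * φ₂ t + c * φ₂ t ^ 2)
      = fun t => (a * (φ₁ t * φ₁ t) + b * (φ₁ t * φ₂ t)) + c * (φ₂ t * φ₂ t) := by
    ext t; ring
  change aperyOp₃ (fun t => a * φ₁ t ^ 2 + b * φ₁ t * φ₂ t + c * φ₂ t ^ 2) r = 0
  rw [hψ, aperyOp₃_add (by fun_prop) (by fun_prop), aperyOp₃_add (by fun_prop) (by fun_prop),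
    aperyOp₃_const_mul, aperyOp₃_const_mul, aperyOp₃_const_mul,
    aperyOp₃_mul_eq_zero hA₁ hA₁ hL₁ hL₁, aperyOp₃_mul_eq_zero hA₁ hA₂ hL₁ hL₂,
    aperyOp₃_mul_eq_zero hA₂ hA₂ hL₂ hL₂]
  simp
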